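/- arXiv:2602.13223 — 5 statements merged into one kernel-verified Lean document; each statement's English description precedes it below -/
import Mathlib

section
/- Let N ≥ 1 and let B' and C' be N×N complex matrices. The 2N×2N companion matrix K = [[0, 1], [−C', −B']] is diagonalizable over ℂ (i.e., there exist an invertible complex matrix T and a complex diagonal matrix D with K = T·D·T⁻¹) if and only if for every σ ∈ ℂ the dimension of the kernel of S(σ) = σ²·1 + σ·B' + C' (the geometric multiplicity) equals the multiplicity of σ as a root of the degree-2N polynomial p(X) = det(X²·1 + X·B' + C') (the algebraic multiplicity). -/
/-!
`K` is diagonalizable iff its eigenspaces span, iff (over the algebraically closed field `ℂ`) each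
eigenspace is the whole generalized eigenspace, iff the geometric multiplicity of every eigenvalue
of `K` equals its multiplicity as a root of `charpoly K`. Two facts about the companion matrix
translate this into the pencil: `charpoly K = det S(X)`, and `x ↦ (x, σ x)` is an isomorphism
from `ker S(σ)` onto the `σ`-eigenspace of `K`.
-/

open Matrix Polynomial

open Module End

namespace Module.End

variable {F V : Type*} [Field F] [IsAlgClosed F] [AddCommGroup V] [Module F V]
  [FiniteDimensional F V]

theorem iSup_eigenspace_eq_top_iff_forall_eigenspace_eq_maxGenEigenspace (f : End F V) :
    ⨆ μ, f.eigenspace μ = ⊤ ↔ ∀ μ, f.eigenspace μ = f.maxGenEigenspace μ := by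
  refine ⟨fun h ↦ congrFun <| (f.independent_maxGenEigenspace.le_iff_eq_of_iSup_eq_top h).mp
    fun _ ↦ eigenspace_le_maxGenEigenspace, fun h ↦ ?_⟩
  simpa only [h] using iSup_maxGenEigenspace_eq_top f

theorem iSup_eigenspace_eq_top_iff_forall_finrank_eigenspace_eq_rootMultiplicity (f : End F V) :
    ⨆ μ, f.eigenspace μ = ⊤ ↔
      ∀ μ, finrank F (f.eigenspace μ) = f.charpoly.rootMultiplicity μ := by
  rw [iSup_eigenspace_eq_top_iff_forall_eigenspace_eq_maxGenEigenspace]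
  refine forall_congr' fun μ ↦ ?_
  rw [← LinearMap.finrank_maxGenEigenspace_eq]
  exact ⟨fun h ↦ by rw [h], Submodule.eq_of_le_of_finrank_eq eigenspace_le_maxGenEigenspace⟩

end Module.End

namespace Matrix

variable {R F n : Type*} [CommRing R] [Field F] [Fintype n] [DecidableEq n]

theorem iSup_eigenspace_mulVecLin_eq_top_of_eq_conj_diagonal {A T : Matrix n n R} {d : n → R}
    (hT : IsUnit T.det) (hA : A = T * diagonal d * T⁻¹) :
    ⨆ μ, eigenspace A.mulVecLin μ = ⊤ := by
  have hAT : A * T = T * diagonal d := by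
    rw [hA, Matrix.mul_assoc (T * _), nonsing_inv_mul _ hT, Matrix.mul_one]
  have hmaps (μ : R) : (eigenspace (diagonal d).mulVecLin μ).map T.mulVecLin ≤
      eigenspace A.mulVecLin μ := by
    rintro _ ⟨x, hx, rfl⟩
    rw [SetLike.mem_coe, mem_eigenspace_iff] at hx
    rw [mem_eigenspace_iff]
    simp only [mulVecLin_apply, mulVec_mulVec, hAT] at hx ⊢
    rw [← mulVec_mulVec, hx, mulVec_smul]
  have hsurj : LinearMap.range T.mulVecLin = ⊤ := LinearMap.range_eq_top.mpr
    (mulVec_surjective_iff_isUnit.mpr ((isUnit_iff_isUnit_det T).mpr hT))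
  rw [eq_top_iff, ← hsurj, LinearMap.range_eq_map, ← iSup_eigenspace_toLin'_diagonal_eq_top d,
    Submodule.map_iSup]
  exact iSup_mono hmaps

theorem exists_eq_conj_diagonal_of_basis_eigenvectors {A : Matrix n n R} (v : Basis n R (n → R))
    (d : n → R) (hv : ∀ j, A *ᵥ v j = d j • v j) :
    ∃ T : Matrix n n R, IsUnit T.det ∧ A = T * diagonal d * T⁻¹ := by
  let T := (Pi.basisFun R n).toMatrix v
  have : Invertible T := (Pi.basisFun R n).invertibleToMatrix v
  have hAT : A * T = T * diagonal d := by
    ext i j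
    rw [mul_diagonal]
    simpa [T, Basis.toMatrix_apply, mul_apply, mulVec, dotProduct, mul_comm]
      using congrFun (hv j) i
  refine ⟨T, isUnit_det_of_invertible T, ?_⟩
  rw [← hAT, Matrix.mul_assoc, mul_nonsing_inv _ (isUnit_det_of_invertible T), Matrix.mul_one]

theorem exists_eq_conj_diagonal_of_iSup_eigenspace_eq_top {A : Matrix n n F}
    (h : ⨆ μ, eigenspace A.mulVecLin μ = ⊤) :
    ∃ (T : Matrix n n F) (d : n → F), IsUnit T.det ∧ A = T * diagonal d * T⁻¹ := by
  classical
  have hA := DirectSum.isInternal_submodule_of_iSupIndep_of_iSup_eq_top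
    (eigenspaces_iSupIndep A.mulVecLin) h
  let v := hA.collectedBasis fun μ ↦ finBasis F (eigenspace A.mulVecLin μ)
  let e := v.indexEquiv (Pi.basisFun F n)
  obtain ⟨T, hT⟩ := exists_eq_conj_diagonal_of_basis_eigenvectors (v.reindex e)
    (fun j ↦ (e.symm j).1) fun j ↦ by
      rw [Basis.reindex_apply]
      exact mem_eigenspace_iff.mp (hA.collectedBasis_mem _ _)
  exact ⟨T, _, hT⟩

theorem exists_eq_conj_diagonal_iff_iSup_eigenspace_eq_top (A : Matrix n n F) :
    (∃ (T : Matrix n n F) (d : n → F), IsUnit T.det ∧ A = T * diagonal d * T⁻¹) ↔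
      ⨆ μ, eigenspace A.mulVecLin μ = ⊤ :=
  ⟨fun ⟨_, _, hT, hA⟩ ↦ iSup_eigenspace_mulVecLin_eq_top_of_eq_conj_diagonal hT hA,
    exists_eq_conj_diagonal_of_iSup_eigenspace_eq_top⟩

theorem charpoly_fromBlocks_zero_one_neg_neg (B' C' : Matrix n n R) :
    (fromBlocks 0 1 (-C') (-B')).charpoly =
      det ((X : R[X]) ^ 2 • (1 : Matrix n n R[X]) + (X : R[X]) • B'.map C + C'.map C) := by
  set S : Matrix n n R[X] := (X : R[X]) ^ 2 • 1 + (X : R[X]) • B'.map C + C'.map C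
  set D : Matrix n n R[X] := (X : R[X]) • 1 + B'.map C
  have hchar : charmatrix (fromBlocks 0 1 (-C') (-B')) =
      fromBlocks ((X : R[X]) • 1) (-1) (C'.map C) D := by
    rw [charmatrix_fromBlocks]
    congr 1 <;> ext i j <;> by_cases h : i = j <;> simp [charmatrix, h, D, diagonal]
  -- Multiplying by a block matrix of determinant `det (-D - (-1) * (D + 1)) = 1` on the left
  -- makes the characteristic matrix block lower triangular.
  have hrow : fromBlocks (-D) (-1) (D + 1) 1 * charmatrix (fromBlocks 0 1 (-C') (-B')) =
      fromBlocks (-S) 0 ((D + 1) * ((X : R[X]) • 1) + C'.map C) (-1) := by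
    rw [hchar, fromBlocks_multiply]
    congr 1 <;> simp [S, D, smul_smul, ← sq] <;> abel
  have hdet := congrArg det hrow
  rw [det_mul, det_fromBlocks_one₂₂, det_fromBlocks_zero₁₂, ← det_mul] at hdet
  simpa [charpoly] using hdet

theorem fromBlocks_zero_one_neg_neg_mulVec_elim_eq_smul_iff (B' C' : Matrix n n R) (σ : R)
    (x y : n → R) :
    fromBlocks 0 1 (-C') (-B') *ᵥ Sum.elim x y = σ • Sum.elim x y ↔
      y = σ • x ∧ (σ ^ 2 • (1 : Matrix n n R) + σ • B' + C') *ᵥ x = 0 := by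
  have hsmul : σ • Sum.elim x y = Sum.elim (σ • x) (σ • y) := by ext (i | i) <;> rfl
  rw [fromBlocks_mulVec, Sum.elim_comp_inl, Sum.elim_comp_inr, hsmul, Sum.elim_eq_iff]
  simp only [zero_mulVec, one_mulVec, zero_add, neg_mulVec, add_mulVec, smul_mulVec]
  refine and_congr_right fun hy ↦ ?_
  subst hy
  rw [mulVec_smul]
  constructor <;> intro h <;> linear_combination (norm := module) -h

theorem finrank_eigenspace_fromBlocks_zero_one_neg_neg (B' C' : Matrix n n R) (σ : R) :
    finrank R (eigenspace (fromBlocks 0 1 (-C') (-B')).mulVecLin σ) =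
      finrank R (LinearMap.ker (σ ^ 2 • (1 : Matrix n n R) + σ • B' + C').mulVecLin) := by
  let ι : (n → R) →ₗ[R] (n ⊕ n → R) :=
    { toFun := fun x ↦ Sum.elim x (σ • x)
      map_add' := fun x y ↦ by ext (i | i) <;> simp
      map_smul' := fun c x ↦ by ext (i | i) <;> simp [mul_left_comm] }
  have hι : Function.Injective ι := fun x y h ↦ by
    funext i
    simpa [ι] using congrFun h (Sum.inl i)
  have hmap : (LinearMap.ker (σ ^ 2 • (1 : Matrix n n R) + σ • B' + C').mulVecLin).map ι =
      eigenspace (fromBlocks 0 1 (-C') (-B')).mulVecLin σ := by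
    ext v
    obtain ⟨x, y, rfl⟩ : ∃ x y, v = Sum.elim x y := ⟨_, _, (Sum.elim_comp_inl_inr v).symm⟩
    simp only [Submodule.mem_map, LinearMap.mem_ker, mulVecLin_apply, mem_eigenspace_iff,
      fromBlocks_zero_one_neg_neg_mulVec_elim_eq_smul_iff, ι, LinearMap.coe_mk, AddHom.coe_mk,
      Sum.elim_eq_iff]
    constructor
    · rintro ⟨z, hz, rfl, rfl⟩
      exact ⟨rfl, hz⟩
    · rintro ⟨rfl, hx⟩
      exact ⟨x, hx, rfl, rfl⟩
  rw [← hmap, (Submodule.equivMapOfInjective ι hι _).finrank_eq]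

end Matrix

theorem companion_diagonalizable_iff_geometric_eq_algebraic_general
    (N : ℕ) (B' C' : Matrix (Fin N) (Fin N) ℂ) :
    (∃ (T : Matrix (Fin N ⊕ Fin N) (Fin N ⊕ Fin N) ℂ) (d : Fin N ⊕ Fin N → ℂ),
        IsUnit T.det ∧
        Matrix.fromBlocks 0 1 (-C') (-B') = T * Matrix.diagonal d * T⁻¹) ↔
      ∀ σ : ℂ,
        Module.finrank ℂ
            (LinearMap.ker
              (σ ^ 2 • (1 : Matrix (Fin N) (Fin N) ℂ) + σ • B' + C').mulVecLin) =
          Polynomial.rootMultiplicity σ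
            (((Polynomial.X : Polynomial ℂ) ^ 2 • (1 : Matrix (Fin N) (Fin N) (Polynomial ℂ)) +
              (Polynomial.X : Polynomial ℂ) • B'.map Polynomial.C + C'.map Polynomial.C).det) := by
  rw [exists_eq_conj_diagonal_iff_iSup_eigenspace_eq_top,
    iSup_eigenspace_eq_top_iff_forall_finrank_eigenspace_eq_rootMultiplicity, charpoly_mulVecLin,
    charpoly_fromBlocks_zero_one_neg_neg]
  simp_rw [finrank_eigenspace_fromBlocks_zero_one_neg_neg]

/-- the companion matrix `K = [[0, 1], [−C', −B']]` is diagonalizable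
over ℂ iff, for every `σ ∈ ℂ`, the geometric multiplicity `dim ker S(σ)` of the
second-order pencil `S(σ) = σ²·1 + σ·B' + C'` equals the algebraic multiplicity
of `σ` as a root of the polynomial `det(X²·1 + X·B' + C')`. -/
theorem companion_diagonalizable_iff_geometric_eq_algebraic
    (N : ℕ) (hN : 1 ≤ N) (B' C' : Matrix (Fin N) (Fin N) ℂ) :
    (∃ (T : Matrix (Fin N ⊕ Fin N) (Fin N ⊕ Fin N) ℂ) (d : Fin N ⊕ Fin N → ℂ),
        IsUnit T.det ∧
        Matrix.fromBlocks 0 1 (-C') (-B') = T * Matrix.diagonal d * T⁻¹) ↔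
      ∀ σ : ℂ,
        Module.finrank ℂ
            (LinearMap.ker
              (σ ^ 2 • (1 : Matrix (Fin N) (Fin N) ℂ) + σ • B' + C').mulVecLin) =
          Polynomial.rootMultiplicity σ
            (((Polynomial.X : Polynomial ℂ) ^ 2 • (1 : Matrix (Fin N) (Fin N) (Polynomial ℂ)) +
              (Polynomial.X : Polynomial ℂ) • B'.map Polynomial.C + C'.map Polynomial.C).det) :=
  companion_diagonalizable_iff_geometric_eq_algebraic_general N B' C'
end

section
/- Let N ≥ 1 and let B' and C' be N×N real matrices with companion matrix K = [[0, 1], [−C', −B']]. Then K is diagonalizable over ℝ if and only if there exist N×N real matrices V₁ and Q and N×N real diagonal matrices D₁ and D₂ such that det V₁ ≠ 0, det(Q·D₂ − D₁·Q) ≠ 0, and K·P₀ = P₀·diag(D₁, D₂), where P₀ is the 2N×2N block matrix P₀ = [[V₁, V₁Q], [V₁D₁, V₁QD₂]] (which is then invertible, with det P₀ = (det V₁)²·det(QD₂ − D₁Q)). -/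
open Matrix

/-! Every column of a matrix `P` with `K * P = P * diagonal d` is an eigenvector of the companion
matrix `K = [[0, 1], [-C', -B']]`, and the block row `[0, 1]` forces an eigenvector `(x, y)` for
`λ` to satisfy `y = λ x`. An invertible `P` has `N` independent top rows, so some `N` of its
columns have an invertible top part; permuting them to the front (and permuting `d` along) makes
the top-left block `V₁` invertible, and writing the top-right block as `V₁ Q` puts `P` in the
form `P₀ = pencilMatrix V₁ Q D₁ D₂`. Conversely `P₀ = diag(V₁, V₁) * [[1, Q], [D₁, Q D₂]]`,
whose determinant is `(det V₁)² det (Q D₂ - D₁ Q)` by a Schur complement, so `P₀` is invertible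
and diagonalizes `K`. -/

namespace Matrix

variable {m n l₁ l₂ : Type*} [Fintype m] [DecidableEq m]

abbrev pencilMatrix {R : Type*} [Semiring R] (V Q D₁ D₂ : Matrix m m R) :
    Matrix (m ⊕ m) (m ⊕ m) R :=
  fromBlocks V (V * Q) (V * D₁) (V * Q * D₂)

theorem det_pencilMatrix {R : Type*} [CommRing R] (V Q D₁ D₂ : Matrix m m R) :
    (pencilMatrix V Q D₁ D₂).det = V.det * V.det * (Q * D₂ - D₁ * Q).det := by
  have hfactor : pencilMatrix V Q D₁ D₂ = fromBlocks V 0 0 V * fromBlocks 1 Q D₁ (Q * D₂) := by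
    simp [pencilMatrix, fromBlocks_multiply, Matrix.mul_assoc]
  rw [hfactor, det_mul, det_fromBlocks_zero₁₂, det_fromBlocks_one₁₁]

theorem eq_mul_of_fromBlocks_zero_one_mul_eq {R : Type*} [Semiring R] [Fintype l₁] [Fintype l₂]
    {C B : Matrix m m R} {X Z : Matrix m l₁ R} {Y W : Matrix m l₂ R}
    {D₁ : Matrix l₁ l₁ R} {D₂ : Matrix l₂ l₂ R}
    (h : fromBlocks 0 1 C B * fromBlocks X Y Z W = fromBlocks X Y Z W * fromBlocks D₁ 0 0 D₂) :
    Z = X * D₁ ∧ W = Y * D₂ := by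
  simp only [fromBlocks_multiply, fromBlocks_inj] at h
  simpa using And.intro h.1 h.2.1

theorem mul_submatrix_eq_submatrix_mul_diagonal {R n' : Type*} [Semiring R]
    [Fintype n] [DecidableEq n] [Fintype n'] [DecidableEq n']
    {A P : Matrix n n R} {d : n → R} (h : A * P = P * diagonal d) (σ : n' ≃ n) :
    A * P.submatrix id σ = P.submatrix id σ * diagonal (d ∘ σ) := by
  rw [← submatrix_diagonal_equiv, submatrix_mul_equiv, ← h]
  ext i j
  simp [mul_apply]

variable {K : Type*} [Field K]

theorem exists_injective_isUnit_det_submatrix [Fintype n] (A : Matrix m n K)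
    (hA : LinearIndependent K A.row) :
    ∃ f : m → n, Function.Injective f ∧ IsUnit (A.submatrix id f).det := by
  have hspan : Submodule.span K (Set.range A.col) = ⊤ := by
    apply Submodule.eq_top_of_finrank_eq
    rw [← rank_eq_finrank_span_cols, hA.rank_matrix, Module.finrank_fintype_fun_eq_card]
  obtain ⟨κ, a, ha, hsp, hli⟩ := exists_linearIndependent' K A.col
  have := Fintype.ofInjective a ha
  let b := Module.Basis.mk hli (by rw [hsp, hspan])
  have hcard : Fintype.card m = Fintype.card κ := by
    rw [← Module.finrank_eq_card_basis b, Module.finrank_fintype_fun_eq_card]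
  let e := Fintype.equivOfCardEq hcard
  refine ⟨a ∘ e, ha.comp e.injective, ?_⟩
  rw [← isUnit_iff_isUnit_det, ← linearIndependent_cols_iff_isUnit]
  exact hli.comp e e.injective

theorem exists_perm_isUnit_det_toBlocks₁₁ {m' : Type*} [Fintype m'] [DecidableEq m']
    (P : Matrix (m ⊕ m') (m ⊕ m') K) (hP : IsUnit P) :
    ∃ σ : Equiv.Perm (m ⊕ m'), IsUnit (P.submatrix id σ).toBlocks₁₁.det := by
  have hrows : LinearIndependent K (P.submatrix Sum.inl id).row :=
    (linearIndependent_rows_iff_isUnit.mpr hP).comp Sum.inl Sum.inl_injective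
  obtain ⟨f, hf, hdet⟩ := exists_injective_isUnit_det_submatrix _ hrows
  obtain ⟨σ, hσ⟩ := Equiv.Perm.exists_extending_pair Sum.inl f Sum.inl_injective hf
  refine ⟨σ, ?_⟩
  convert hdet using 2
  ext i j
  simp [toBlocks₁₁, hσ]

theorem exists_eq_pencilMatrix_of_companion_mul_eq {C B D₁ D₂ : Matrix m m K}
    {P : Matrix (m ⊕ m) (m ⊕ m) K} (hP : IsUnit P) (hV : IsUnit P.toBlocks₁₁.det)
    (h : fromBlocks 0 1 C B * P = P * fromBlocks D₁ 0 0 D₂) :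
    ∃ V Q : Matrix m m K, V.det ≠ 0 ∧ (Q * D₂ - D₁ * Q).det ≠ 0 ∧ P = pencilMatrix V Q D₁ D₂ := by
  set V := P.toBlocks₁₁
  set Q := V⁻¹ * P.toBlocks₁₂
  rw [← fromBlocks_toBlocks P] at h
  obtain ⟨hZ, hW⟩ := eq_mul_of_fromBlocks_zero_one_mul_eq h
  have hVQ : V * Q = P.toBlocks₁₂ := mul_nonsing_inv_cancel_left _ _ hV
  have hP₀ : P = pencilMatrix V Q D₁ D₂ := by
    rw [pencilMatrix, hVQ, ← hZ, ← hW, fromBlocks_toBlocks]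
  refine ⟨V, Q, hV.ne_zero, fun hQ => ?_, hP₀⟩
  rw [hP₀, isUnit_iff_isUnit_det, det_pencilMatrix, hQ, mul_zero] at hP
  exact not_isUnit_zero hP

end Matrix

theorem companion_diagonalizable_iff_exists_pencil_eigenbasis_general
    (N : ℕ) (B' C' : Matrix (Fin N) (Fin N) ℝ) :
    (∃ (P : Matrix (Fin N ⊕ Fin N) (Fin N ⊕ Fin N) ℝ) (d : Fin N ⊕ Fin N → ℝ),
        IsUnit P.det ∧
        Matrix.fromBlocks 0 1 (-C') (-B') = P * Matrix.diagonal d * P⁻¹) ↔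
      (∃ (V₁ Q : Matrix (Fin N) (Fin N) ℝ) (d₁ d₂ : Fin N → ℝ),
        V₁.det ≠ 0 ∧
        (Q * Matrix.diagonal d₂ - Matrix.diagonal d₁ * Q).det ≠ 0 ∧
        Matrix.fromBlocks 0 1 (-C') (-B') *
            Matrix.fromBlocks V₁ (V₁ * Q) (V₁ * Matrix.diagonal d₁)
              (V₁ * Q * Matrix.diagonal d₂) =
          Matrix.fromBlocks V₁ (V₁ * Q) (V₁ * Matrix.diagonal d₁)
              (V₁ * Q * Matrix.diagonal d₂) *
            Matrix.fromBlocks (Matrix.diagonal d₁) 0 0 (Matrix.diagonal d₂)) := by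
  constructor
  · rintro ⟨P, d, hP, hK⟩
    have hPu : IsUnit P := (isUnit_iff_isUnit_det P).mpr hP
    obtain ⟨σ, hσ⟩ := exists_perm_isUnit_det_toBlocks₁₁ P hPu
    have hKP : fromBlocks 0 1 (-C') (-B') * P.submatrix id σ = P.submatrix id σ *
        fromBlocks (diagonal ((d ∘ σ) ∘ Sum.inl)) 0 0 (diagonal ((d ∘ σ) ∘ Sum.inr)) := by
      rw [fromBlocks_diagonal, Sum.elim_comp_inl_inr]
      refine mul_submatrix_eq_submatrix_mul_diagonal ?_ σ
      rw [hK, Matrix.mul_assoc, nonsing_inv_mul P hP, Matrix.mul_one]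
    have hPσu : IsUnit (P.submatrix id σ) := (isUnit_submatrix_equiv (.refl _) σ).mpr hPu
    obtain ⟨V, Q, hV, hQ, hPσ⟩ := exists_eq_pencilMatrix_of_companion_mul_eq hPσu hσ hKP
    rw [hPσ] at hKP
    exact ⟨V, Q, _, _, hV, hQ, hKP⟩
  · rintro ⟨V₁, Q, d₁, d₂, hV, hQ, hKP⟩
    have hP₀ : IsUnit (pencilMatrix V₁ Q (diagonal d₁) (diagonal d₂)).det := by
      rw [det_pencilMatrix]
      exact isUnit_iff_ne_zero.mpr (mul_ne_zero (mul_ne_zero hV hV) hQ)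
    refine ⟨_, Sum.elim d₁ d₂, hP₀, ?_⟩
    rw [← fromBlocks_diagonal, ← hKP, Matrix.mul_assoc, mul_nonsing_inv _ hP₀, Matrix.mul_one]

/-- the companion matrix `K = [[0, 1], [−C', −B']]` is diagonalizable
over ℝ iff there exist N×N real matrices `V₁`, `Q` and real diagonal matrices
`D₁ = diagonal d₁`, `D₂ = diagonal d₂` with `det V₁ ≠ 0`,
`det (Q·D₂ − D₁·Q) ≠ 0` and `K·P₀ = P₀·diag(D₁, D₂)`, where
`P₀ = [[V₁, V₁Q], [V₁D₁, V₁QD₂]]`. -/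
theorem companion_diagonalizable_iff_exists_pencil_eigenbasis
    (N : ℕ) (hN : 1 ≤ N) (B' C' : Matrix (Fin N) (Fin N) ℝ) :
    (∃ (P : Matrix (Fin N ⊕ Fin N) (Fin N ⊕ Fin N) ℝ) (d : Fin N ⊕ Fin N → ℝ),
        IsUnit P.det ∧
        Matrix.fromBlocks 0 1 (-C') (-B') = P * Matrix.diagonal d * P⁻¹) ↔
      (∃ (V₁ Q : Matrix (Fin N) (Fin N) ℝ) (d₁ d₂ : Fin N → ℝ),
        V₁.det ≠ 0 ∧
        (Q * Matrix.diagonal d₂ - Matrix.diagonal d₁ * Q).det ≠ 0 ∧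
        Matrix.fromBlocks 0 1 (-C') (-B') *
            Matrix.fromBlocks V₁ (V₁ * Q) (V₁ * Matrix.diagonal d₁)
              (V₁ * Q * Matrix.diagonal d₂) =
          Matrix.fromBlocks V₁ (V₁ * Q) (V₁ * Matrix.diagonal d₁)
              (V₁ * Q * Matrix.diagonal d₂) *
            Matrix.fromBlocks (Matrix.diagonal d₁) 0 0 (Matrix.diagonal d₂)) :=
  companion_diagonalizable_iff_exists_pencil_eigenbasis_general N B' C'
end

section
/- Let N ≥ 1, let B' and C' be N×N real matrices, let V₁ be an invertible N×N real matrix, Q an N×N real matrix, and D₁ = diag(λ₁, …, λ_N), D₂ = diag(ρ₁, …, ρ_N) real diagonal matrices with det(D₁Q − QD₂) ≠ 0. Set P₀ = [[V₁, V₁Q], [V₁D₁, V₁QD₂]]. Then K·P₀ = P₀·diag(D₁, D₂) (i.e., the first-order pencil M(λ) is diagonalized by P₀ with eigenvalues λᵢ and ρᵢ) if and only if for every i = 1, …, N one has S(λᵢ)·colᵢ(V₁) = 0 and S(ρᵢ)·colᵢ(V₁Q) = 0. Moreover, in that case det S(λ) = (λ−λ₁)⋯(λ−λ_N)·(λ−ρ₁)⋯(λ−ρ_N)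 for all λ ∈ ℝ. -/
/-! Block multiplication turns `K P₀ = P₀ diag(D₁, D₂)` into the matrix quadratic equations
`V D² + B' V D + C' V = 0` for `(V, D) = (V₁, D₁)` and `(V₁ Q, D₂)`, which, read column by
column, are the eigenpair conditions. The factorization
`P₀ = diag(V₁, V₁) [[1, 0], [D₁, 1]] [[1, Q], [0, Q D₂ - D₁ Q]]` shows that `P₀` is invertible,
so `K` is similar to `diag(D₁, D₂)` and has characteristic polynomial `∏ (λ - λᵢ) ∏ (λ - ρᵢ)`;
a block shear shows `det (λ - K) = det S(λ)`. -/

open Matrix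

namespace Matrix

variable {n R : Type*} [DecidableEq n] [CommRing R]

def companion (B C : Matrix n n R) : Matrix (n ⊕ n) (n ⊕ n) R :=
  fromBlocks 0 1 (-C) (-B)

def quadraticPencil (B C : Matrix n n R) (μ : R) : Matrix n n R :=
  μ ^ 2 • 1 + μ • B + C

variable [Fintype n]

theorem companion_mul_fromBlocks_eq_iff (B C V W D E : Matrix n n R) :
    companion B C * fromBlocks V W (V * D) (W * E) =
        fromBlocks V W (V * D) (W * E) * fromBlocks D 0 0 E ↔
      V * D * D + B * (V * D) + C * V = 0 ∧ W * E * E + B * (W * E) + C * W = 0 := by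
  have neg_add_neg_eq_iff (X Y Z : Matrix n n R) : -X + -Y = Z ↔ Z + Y + X = 0 := by
    rw [← sub_eq_zero, show -X + -Y - Z = -(Z + Y + X) by abel, neg_eq_zero]
  simp [companion, fromBlocks_multiply, neg_add_neg_eq_iff]

theorem quadratic_mul_diagonal_eq_zero_iff (B C V : Matrix n n R) (d : n → R) :
    V * diagonal d * diagonal d + B * (V * diagonal d) + C * V = 0 ↔
      ∀ i, quadraticPencil B C (d i) *ᵥ (fun j => V j i) = 0 := by
  have hcol (i : n) : (fun j => (V * diagonal d * diagonal d + B * (V * diagonal d) + C * V) j i) =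
      quadraticPencil B C (d i) *ᵥ fun j => V j i := by
    ext j
    simp only [← Matrix.mul_assoc, add_apply, mul_diagonal, quadraticPencil, add_mulVec,
      smul_mulVec, one_mulVec, Pi.add_apply, Pi.smul_apply, smul_eq_mul]
    simp only [mul_apply, mulVec, dotProduct]
    ring
  constructor
  · intro h i
    rw [← hcol, h]
    rfl
  · intro h
    ext j i
    exact congrFun ((hcol i).trans (h i)) j

theorem det_J : (J n R).det = 1 := by
  have : J n R = fromBlocks 1 (-1) 0 1 * fromBlocks 1 0 1 1 * fromBlocks 1 (-1) 0 1 := by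
    simp [J, fromBlocks_multiply]
  simp [this]

theorem det_fromBlocks_zero_neg_one (S X : Matrix n n R) :
    (fromBlocks 0 (-1) S X).det = S.det := by
  have : fromBlocks 0 (-1) S X = fromBlocks 1 0 (-X) 1 * J n R * fromBlocks S 0 0 1 := by
    simp [J, fromBlocks_multiply]
  rw [this, det_mul, det_mul, det_J, det_fromBlocks_zero₁₂, det_fromBlocks_zero₁₂]
  simp

theorem eval_charpoly_companion (B C : Matrix n n R) (μ : R) :
    (companion B C).charpoly.eval μ = (quadraticPencil B C μ).det := by
  have hpencil :
      scalar (n ⊕ n) μ - companion B C = fromBlocks (μ • 1) (-1 : Matrix n n R) C (μ • 1 + B) := by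
    rw [scalar_apply, ← smul_one_eq_diagonal, ← fromBlocks_one, fromBlocks_smul, companion,
      sub_eq_add_neg, fromBlocks_neg, fromBlocks_add]
    simp
  have hshear : fromBlocks (μ • 1) (-1 : Matrix n n R) C (μ • 1 + B) * fromBlocks 1 0 (μ • 1) 1 =
      fromBlocks 0 (-1) (quadraticPencil B C μ) (μ • 1 + B) := by
    simp only [fromBlocks_multiply, quadraticPencil]
    congr 1 <;> simp [smul_smul, pow_two]
    abel
  rw [eval_charpoly, hpencil, ← det_fromBlocks_zero_neg_one (quadraticPencil B C μ) (μ • 1 + B),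
    ← hshear, det_mul, det_fromBlocks_zero₁₂]
  simp

theorem charpoly_eq_of_mul_eq_mul {m : Type*} [Fintype m] [DecidableEq m] {K P D : Matrix m m R}
    (h : K * P = P * D) (hP : IsUnit P.det) : K.charpoly = D.charpoly := by
  have : K = P * D * P⁻¹ := by
    rw [← h, Matrix.mul_assoc, mul_nonsing_inv _ hP, Matrix.mul_one]
  rw [this, charpoly_mul_comm, ← Matrix.mul_assoc, nonsing_inv_mul _ hP, Matrix.one_mul]

theorem det_fromBlocks_eq_det_sq_mul_det_sylvester (V Q D E : Matrix n n R) :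
    (fromBlocks V (V * Q) (V * D) (V * Q * E)).det = V.det ^ 2 * (Q * E - D * Q).det := by
  have : fromBlocks V (V * Q) (V * D) (V * Q * E) =
      fromBlocks V 0 0 V * fromBlocks 1 0 D 1 * fromBlocks 1 Q 0 (Q * E - D * Q) := by
    simp [fromBlocks_multiply, Matrix.mul_sub, Matrix.mul_assoc]
  rw [this, det_mul, det_mul, det_fromBlocks_zero₂₁, det_fromBlocks_zero₁₂, det_fromBlocks_zero₂₁]
  simp [pow_two]

end Matrix

theorem companion_eigenbasis_iff_secondOrder_eigenpairs_general
    (N : ℕ) (B' C' V₁ Q : Matrix (Fin N) (Fin N) ℝ)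
    (d₁ d₂ : Fin N → ℝ) (hV : V₁.det ≠ 0)
    (hΔ : (Matrix.diagonal d₁ * Q - Q * Matrix.diagonal d₂).det ≠ 0) :
    ((Matrix.fromBlocks 0 1 (-C') (-B') *
          Matrix.fromBlocks V₁ (V₁ * Q) (V₁ * Matrix.diagonal d₁)
            (V₁ * Q * Matrix.diagonal d₂) =
        Matrix.fromBlocks V₁ (V₁ * Q) (V₁ * Matrix.diagonal d₁)
            (V₁ * Q * Matrix.diagonal d₂) *
          Matrix.fromBlocks (Matrix.diagonal d₁) 0 0 (Matrix.diagonal d₂)) ↔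
      (∀ i : Fin N,
        ((d₁ i) ^ 2 • (1 : Matrix (Fin N) (Fin N) ℝ) + (d₁ i) • B' + C').mulVec
            (fun j => V₁ j i) = 0 ∧
        ((d₂ i) ^ 2 • (1 : Matrix (Fin N) (Fin N) ℝ) + (d₂ i) • B' + C').mulVec
            (fun j => (V₁ * Q) j i) = 0)) ∧
    ((Matrix.fromBlocks 0 1 (-C') (-B') *
          Matrix.fromBlocks V₁ (V₁ * Q) (V₁ * Matrix.diagonal d₁)
            (V₁ * Q * Matrix.diagonal d₂) =
        Matrix.fromBlocks V₁ (V₁ * Q) (V₁ * Matrix.diagonal d₁)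
            (V₁ * Q * Matrix.diagonal d₂) *
          Matrix.fromBlocks (Matrix.diagonal d₁) 0 0 (Matrix.diagonal d₂)) →
      ∀ lam : ℝ,
        (lam ^ 2 • (1 : Matrix (Fin N) (Fin N) ℝ) + lam • B' + C').det =
          (∏ i : Fin N, (lam - d₁ i)) * ∏ i : Fin N, (lam - d₂ i)) := by
  refine ⟨?_, fun hK lam => ?_⟩
  · rw [← companion, companion_mul_fromBlocks_eq_iff, quadratic_mul_diagonal_eq_zero_iff,
      quadratic_mul_diagonal_eq_zero_iff, forall_and]
    rfl
  · have hP : IsUnit (fromBlocks V₁ (V₁ * Q) (V₁ * diagonal d₁) (V₁ * Q * diagonal d₂)).det := by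
      rw [det_fromBlocks_eq_det_sq_mul_det_sylvester, ← neg_sub, det_neg, isUnit_iff_ne_zero]
      simp [hV, hΔ]
    have hchar := charpoly_eq_of_mul_eq_mul hK hP
    calc (lam ^ 2 • (1 : Matrix (Fin N) (Fin N) ℝ) + lam • B' + C').det
        = (companion B' C').charpoly.eval lam := (eval_charpoly_companion B' C' lam).symm
      _ = (fromBlocks (diagonal d₁) 0 0 (diagonal d₂)).charpoly.eval lam := by
        rw [companion, hchar]
      _ = (∏ i, (lam - d₁ i)) * ∏ i, (lam - d₂ i) := by
        simp [charpoly_diagonal, Polynomial.eval_prod]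

/-- given invertible `V₁`, a matrix `Q`, and diagonal matrices
`D₁ = diagonal d₁`, `D₂ = diagonal d₂` with `det(D₁Q − QD₂) ≠ 0`, the matrix
`P₀ = [[V₁, V₁Q], [V₁D₁, V₁QD₂]]` diagonalizes the companion matrix
`K = [[0,1],[−C',−B']]` (i.e. `K·P₀ = P₀·diag(D₁,D₂)`) iff the columns of `V₁`
and of `V₁Q` are eigenvectors of the second-order pencil
`S(λ) = λ²·1 + λ·B' + C'` with eigenvalues `d₁ i` resp. `d₂ i`; and in that case
`det S(λ) = ∏ᵢ (λ − d₁ i) · ∏ᵢ (λ − d₂ i)` for all real `λ`. -/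
theorem companion_eigenbasis_iff_secondOrder_eigenpairs
    (N : ℕ) (hN : 1 ≤ N) (B' C' V₁ Q : Matrix (Fin N) (Fin N) ℝ)
    (d₁ d₂ : Fin N → ℝ) (hV : V₁.det ≠ 0)
    (hΔ : (Matrix.diagonal d₁ * Q - Q * Matrix.diagonal d₂).det ≠ 0) :
    ((Matrix.fromBlocks 0 1 (-C') (-B') *
          Matrix.fromBlocks V₁ (V₁ * Q) (V₁ * Matrix.diagonal d₁)
            (V₁ * Q * Matrix.diagonal d₂) =
        Matrix.fromBlocks V₁ (V₁ * Q) (V₁ * Matrix.diagonal d₁)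
            (V₁ * Q * Matrix.diagonal d₂) *
          Matrix.fromBlocks (Matrix.diagonal d₁) 0 0 (Matrix.diagonal d₂)) ↔
      (∀ i : Fin N,
        ((d₁ i) ^ 2 • (1 : Matrix (Fin N) (Fin N) ℝ) + (d₁ i) • B' + C').mulVec
            (fun j => V₁ j i) = 0 ∧
        ((d₂ i) ^ 2 • (1 : Matrix (Fin N) (Fin N) ℝ) + (d₂ i) • B' + C').mulVec
            (fun j => (V₁ * Q) j i) = 0)) ∧
    ((Matrix.fromBlocks 0 1 (-C') (-B') *
          Matrix.fromBlocks V₁ (V₁ * Q) (V₁ * Matrix.diagonal d₁)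
            (V₁ * Q * Matrix.diagonal d₂) =
        Matrix.fromBlocks V₁ (V₁ * Q) (V₁ * Matrix.diagonal d₁)
            (V₁ * Q * Matrix.diagonal d₂) *
          Matrix.fromBlocks (Matrix.diagonal d₁) 0 0 (Matrix.diagonal d₂)) →
      ∀ lam : ℝ,
        (lam ^ 2 • (1 : Matrix (Fin N) (Fin N) ℝ) + lam • B' + C').det =
          (∏ i : Fin N, (lam - d₁ i)) * ∏ i : Fin N, (lam - d₂ i)) :=
  companion_eigenbasis_iff_secondOrder_eigenpairs_general N B' C' V₁ Q d₁ d₂ hV hΔ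
end

section
/- Let N ≥ 1, let V₁ be an invertible N×N real matrix, Q an N×N real matrix, and D₁ = diag(λ₁, …, λ_N), D₂ = diag(ρ₁, …, ρ_N) real diagonal matrices such that Δ := D₁Q − QD₂ is invertible. Define S(λ) := V₁·Δ·(λ·1 − D₂)·Δ⁻¹·(λ·1 − D₁)·V₁⁻¹. Then for every i = 1, …, N one has S(λᵢ)·colᵢ(V₁) = 0 and S(ρᵢ)·colᵢ(V₁Q) = 0; that is, (λᵢ, colᵢ(V₁)) and (ρᵢ, colᵢ(V₁Q)) are eigenpairs of the second-order pencil S(λ). -/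
/-!
Write `Δ = AQ − QB`. The right factor `λ − A` of the pencil kills every eigenvector `x` of `A`
for `λ`, so `(λ, Vx)` is an eigenpair. For an eigenvector `x` of `B`, the Sylvester identity
`(λ − A)Q = Q(λ − B) − Δ` gives `(λ − A)Qx = −Δx`; then `Δ⁻¹` returns `−x`, which the left factor
`λ − B` kills, so `(λ, VQx)` is an eigenpair. With `A`, `B` diagonal the eigenvectors are the
standard basis vectors.
-/

open Matrix

namespace Matrix

variable {n R : Type*} [Fintype n] [DecidableEq n] [CommRing R]

theorem smul_one_sub_mul_eq_mul_smul_one_sub_sub (c : R) (A B Q : Matrix n n R) :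
    (c • 1 - A) * Q = Q * (c • 1 - B) - (A * Q - Q * B) := by
  simp only [sub_mul, mul_sub, Matrix.smul_mul, Matrix.mul_smul, one_mul, mul_one]
  abel

theorem smul_one_sub_diagonal_mulVec_single (d : n → R) (i : n) :
    (d i • 1 - diagonal d) *ᵥ Pi.single i 1 = 0 := by
  ext j
  rcases eq_or_ne j i with rfl | hji <;> simp [*]

noncomputable def factoredPencil (V Δ A B : Matrix n n R) (c : R) : Matrix n n R :=
  V * Δ * (c • 1 - B) * Δ⁻¹ * (c • 1 - A) * V⁻¹

theorem factoredPencil_mul_eq {V : Matrix n n R} (hV : IsUnit V.det) (Δ A B : Matrix n n R)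
    (c : R) : factoredPencil V Δ A B c * V = V * Δ * (c • 1 - B) * Δ⁻¹ * (c • 1 - A) := by
  rw [factoredPencil, Matrix.mul_assoc _ V⁻¹ V, nonsing_inv_mul V hV, Matrix.mul_one]

theorem factoredPencil_mulVec_mulVec_eq_zero {V A B : Matrix n n R} {c : R} {x : n → R}
    (hV : IsUnit V.det) (Δ : Matrix n n R) (hx : (c • 1 - A) *ᵥ x = 0) :
    factoredPencil V Δ A B c *ᵥ (V *ᵥ x) = 0 := by
  rw [mulVec_mulVec, factoredPencil_mul_eq hV, ← mulVec_mulVec, hx, mulVec_zero]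

theorem factoredPencil_mulVec_mulVec_mul_eq_zero {V A B Q : Matrix n n R} {c : R}
    {x : n → R} (hV : IsUnit V.det) (hΔ : IsUnit (A * Q - Q * B).det)
    (hx : (c • 1 - B) *ᵥ x = 0) :
    factoredPencil V (A * Q - Q * B) A B c *ᵥ ((V * Q) *ᵥ x) = 0 := by
  set Δ := A * Q - Q * B
  have right_factor : (c • 1 - A) *ᵥ (Q *ᵥ x) = -(Δ *ᵥ x) := by
    rw [mulVec_mulVec, smul_one_sub_mul_eq_mul_smul_one_sub_sub c A B Q, sub_mulVec,
      ← mulVec_mulVec, hx, mulVec_zero, zero_sub]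
  have middle_factor : Δ⁻¹ *ᵥ (-(Δ *ᵥ x)) = -x := by
    rw [mulVec_neg, mulVec_mulVec, nonsing_inv_mul Δ hΔ, one_mulVec]
  rw [← mulVec_mulVec x V Q, mulVec_mulVec (Q *ᵥ x) _ V, factoredPencil_mul_eq hV,
    ← mulVec_mulVec, right_factor, ← mulVec_mulVec, middle_factor, ← mulVec_mulVec, mulVec_neg,
    hx, neg_zero, mulVec_zero]

end Matrix

theorem factorized_pencil_eigenpairs_general
    (N : ℕ) (V₁ Q : Matrix (Fin N) (Fin N) ℝ) (d₁ d₂ : Fin N → ℝ)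
    (hV : IsUnit V₁.det)
    (hΔ : IsUnit (Matrix.diagonal d₁ * Q - Q * Matrix.diagonal d₂).det) :
    ∀ i : Fin N,
      (V₁ * (Matrix.diagonal d₁ * Q - Q * Matrix.diagonal d₂) *
          ((d₁ i) • (1 : Matrix (Fin N) (Fin N) ℝ) - Matrix.diagonal d₂) *
          (Matrix.diagonal d₁ * Q - Q * Matrix.diagonal d₂)⁻¹ *
          ((d₁ i) • (1 : Matrix (Fin N) (Fin N) ℝ) - Matrix.diagonal d₁) *
          V₁⁻¹).mulVec (fun j => V₁ j i) = 0 ∧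
      (V₁ * (Matrix.diagonal d₁ * Q - Q * Matrix.diagonal d₂) *
          ((d₂ i) • (1 : Matrix (Fin N) (Fin N) ℝ) - Matrix.diagonal d₂) *
          (Matrix.diagonal d₁ * Q - Q * Matrix.diagonal d₂)⁻¹ *
          ((d₂ i) • (1 : Matrix (Fin N) (Fin N) ℝ) - Matrix.diagonal d₁) *
          V₁⁻¹).mulVec (fun j => (V₁ * Q) j i) = 0 := by
  intro i
  have column (M : Matrix (Fin N) (Fin N) ℝ) : (fun j => M j i) = M *ᵥ Pi.single i 1 :=
    (mulVec_single_one M i).symm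
  rw [column V₁, column (V₁ * Q)]
  exact ⟨factoredPencil_mulVec_mulVec_eq_zero hV _ (smul_one_sub_diagonal_mulVec_single d₁ i),
    factoredPencil_mulVec_mulVec_mul_eq_zero hV hΔ
      (smul_one_sub_diagonal_mulVec_single d₂ i)⟩

/-- if `Δ = D₁Q − QD₂` is invertible and
`S(λ) = V₁·Δ·(λ·1 − D₂)·Δ⁻¹·(λ·1 − D₁)·V₁⁻¹`, then `(d₁ i, colᵢ(V₁))` and
`(d₂ i, colᵢ(V₁Q))` are eigenpairs of the second-order pencil `S`. -/
theorem factorized_pencil_eigenpairs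
    (N : ℕ) (hN : 1 ≤ N) (V₁ Q : Matrix (Fin N) (Fin N) ℝ) (d₁ d₂ : Fin N → ℝ)
    (hV : IsUnit V₁.det)
    (hΔ : IsUnit (Matrix.diagonal d₁ * Q - Q * Matrix.diagonal d₂).det) :
    ∀ i : Fin N,
      (V₁ * (Matrix.diagonal d₁ * Q - Q * Matrix.diagonal d₂) *
          ((d₁ i) • (1 : Matrix (Fin N) (Fin N) ℝ) - Matrix.diagonal d₂) *
          (Matrix.diagonal d₁ * Q - Q * Matrix.diagonal d₂)⁻¹ *
          ((d₁ i) • (1 : Matrix (Fin N) (Fin N) ℝ) - Matrix.diagonal d₁) *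
          V₁⁻¹).mulVec (fun j => V₁ j i) = 0 ∧
      (V₁ * (Matrix.diagonal d₁ * Q - Q * Matrix.diagonal d₂) *
          ((d₂ i) • (1 : Matrix (Fin N) (Fin N) ℝ) - Matrix.diagonal d₂) *
          (Matrix.diagonal d₁ * Q - Q * Matrix.diagonal d₂)⁻¹ *
          ((d₂ i) • (1 : Matrix (Fin N) (Fin N) ℝ) - Matrix.diagonal d₁) *
          V₁⁻¹).mulVec (fun j => (V₁ * Q) j i) = 0 :=
  factorized_pencil_eigenpairs_general N V₁ Q d₁ d₂ hV hΔ
end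

section
/- Let g, ĝ, g̃ be symmetric 4×4 real matrices, f̂, f̃ antisymmetric 4×4 real matrices, and set Ĝ = ĝ + f̂, G̃ = g̃ + f̃. For every l ∈ ℝ⁴, the 4×4 matrix P(l) = (lᵀgl)·g − (gl)(gl)ᵀ + (Ĝl)(G̃ᵀl)ᵀ satisfies det P(l) = det(g) · (lᵀgl)² · (lᵀĝl) · (lᵀg̃l). (In index notation: det of the principal symbol P^{bq} = l²g^{qb} − g^{qc}l_c l^b + Ĝ^{ba}l_a G̃^{cq}l_c of gauge-fixed extended electromagnetism equals det(g)·l⁴·l̂²·l̃², with l² = l·g·l, l̂² = l·ĝ·l, l̃² = l·g̃·l.) -/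
/-!
For invertible symmetric `g` write `s = lᵀgl`. Then `P(l) = g (s·1 − A B)` with the `n × 2`
matrix `A = (l, −g⁻¹Ĝl)` and the `2 × n` matrix `B = (gl, G̃ᵀl)ᵀ`, and
`charpoly (A B) = X ^ (n − 2) · charpoly (B A)` turns `det P(l)` into `det g · s ^ (n − 2)`
times a `2 × 2` determinant. Its upper-left entry `s − (gl)·l` vanishes, so it equals
`(lᵀĜl)(lᵀG̃l)`. Both sides are continuous in `g`, and `g + t·1` is invertible for all but
finitely many `t`, which removes the invertibility assumption. Finally the antisymmetric parts
`f̂, f̃` drop out of the quadratic forms `lᵀĜl` and `lᵀG̃l`.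
-/

open Matrix Polynomial

section CommRing

variable {n R : Type*} [Fintype n] [CommRing R]

theorem dotProduct_mulVec_self_eq_zero_of_transpose_eq_neg [NoZeroDivisors R] [CharZero R]
    {f : Matrix n n R} (hf : fᵀ = -f) (l : n → R) : l ⬝ᵥ f *ᵥ l = 0 :=
  CharZero.eq_neg_self_iff.mp <| by
    conv_lhs => rw [dotProduct_mulVec, ← mulVec_transpose, hf, neg_mulVec, neg_dotProduct,
      dotProduct_comm]

theorem transpose_mulVec_dotProduct_self (G : Matrix n n R) (l : n → R) :
    Gᵀ *ᵥ l ⬝ᵥ l = l ⬝ᵥ G *ᵥ l := by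
  rw [mulVec_transpose, dotProduct_mulVec]

theorem det_smul_sub_vecMulVec_add_vecMulVec [DecidableEq n] {g : Matrix n n R} (hg : gᵀ = g)
    (hn : 2 ≤ Fintype.card n) (l m c : n → R) :
    ((l ⬝ᵥ g *ᵥ l) • g - vecMulVec (g *ᵥ l) (g *ᵥ l) + vecMulVec (g *ᵥ m) c).det =
      g.det * (l ⬝ᵥ g *ᵥ l) ^ (Fintype.card n - 2) * (l ⬝ᵥ g *ᵥ m) * (c ⬝ᵥ l) := by
  set s := l ⬝ᵥ g *ᵥ l
  let A : Matrix n (Fin 2) R := (of ![l, -m])ᵀ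
  let B : Matrix (Fin 2) n R := of ![g *ᵥ l, c]
  have hfactor : s • g - vecMulVec (g *ᵥ l) (g *ᵥ l) + vecMulVec (g *ᵥ m) c =
      g * (scalar n s - A * B) := by
    have hAB : A * B = vecMulVec l (g *ᵥ l) - vecMulVec m c := by
      ext i j
      simp [A, B, mul_apply, Fin.sum_univ_two, vecMulVec_apply, sub_eq_add_neg]
    rw [hAB, mul_sub, mul_sub, mul_vecMulVec, mul_vecMulVec, scalar_apply,
      ← smul_one_eq_diagonal, Matrix.mul_smul, Matrix.mul_one]
    abel
  have hcomm : (scalar n s - A * B).det =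
      s ^ (Fintype.card n - 2) * (scalar (Fin 2) s - B * A).det := by
    simpa [eval_charpoly] using
      congrArg (eval s) (charpoly_mul_comm_of_le A B (by simpa using hn))
  have hBA : B * A = !![s, -(l ⬝ᵥ g *ᵥ m); c ⬝ᵥ l, -(c ⬝ᵥ m)] := by
    have hsym : g *ᵥ l ⬝ᵥ m = l ⬝ᵥ g *ᵥ m := by
      rw [dotProduct_comm, dotProduct_mulVec, ← mulVec_transpose, hg, dotProduct_comm]
    ext i j
    fin_cases i <;> fin_cases j
    · exact dotProduct_comm _ _
    · exact (dotProduct_neg _ _).trans (congrArg _ hsym)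
    · rfl
    · exact dotProduct_neg _ _
  have hsmall : (scalar (Fin 2) s - B * A).det = (l ⬝ᵥ g *ᵥ m) * (c ⬝ᵥ l) := by
    rw [hBA, det_fin_two]
    simp [scalar_apply]
  rw [hfactor, det_mul, hcomm, hsmall]
  ring

def principalSymbol (g Ghat Gtil : Matrix n n R) (l : n → R) : Matrix n n R :=
  (l ⬝ᵥ g *ᵥ l) • g - vecMulVec (g *ᵥ l) (g *ᵥ l) + vecMulVec (Ghat *ᵥ l) (Gtilᵀ *ᵥ l)

theorem det_principalSymbol_of_isUnit_det [DecidableEq n] {g : Matrix n n R} (hg : gᵀ = g)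
    (hdet : IsUnit g.det) (hn : 2 ≤ Fintype.card n) (Ghat Gtil : Matrix n n R) (l : n → R) :
    (principalSymbol g Ghat Gtil l).det =
      g.det * (l ⬝ᵥ g *ᵥ l) ^ (Fintype.card n - 2) * (l ⬝ᵥ Ghat *ᵥ l) * (l ⬝ᵥ Gtil *ᵥ l) := by
  have hGhat : g *ᵥ g⁻¹ *ᵥ Ghat *ᵥ l = Ghat *ᵥ l := by
    rw [mulVec_mulVec, mul_nonsing_inv _ hdet, one_mulVec]
  rw [principalSymbol, ← hGhat, det_smul_sub_vecMulVec_add_vecMulVec hg hn,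
    transpose_mulVec_dotProduct_self]

end CommRing

section NormedField

variable {n 𝕜 : Type*} [Fintype n] [DecidableEq n] [NontriviallyNormedField 𝕜] [CompleteSpace 𝕜]

theorem dense_setOf_det_add_smul_one_ne_zero (M : Matrix n n 𝕜) :
    Dense {t : 𝕜 | (M + t • 1).det ≠ 0} := by
  have hroots : {t : 𝕜 | (M + t • 1).det = 0} ⊆ {t | (-M).charpoly.IsRoot t} := by
    intro t ht
    simpa [eval_charpoly, scalar_apply, ← smul_one_eq_diagonal, add_comm] using ht
  exact ((finite_setOfPred_isRoot (-M).charpoly_monic.ne_zero).subset hroots).countable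
    |>.dense_compl 𝕜

theorem det_principalSymbol {g : Matrix n n 𝕜} (hg : gᵀ = g) (hn : 2 ≤ Fintype.card n)
    (Ghat Gtil : Matrix n n 𝕜) (l : n → 𝕜) :
    (principalSymbol g Ghat Gtil l).det =
      g.det * (l ⬝ᵥ g *ᵥ l) ^ (Fintype.card n - 2) * (l ⬝ᵥ Ghat *ᵥ l) * (l ⬝ᵥ Gtil *ᵥ l) := by
  have hperturb : (fun t : 𝕜 => (principalSymbol (g + t • 1) Ghat Gtil l).det) =
      fun t => (g + t • 1).det * (l ⬝ᵥ (g + t • 1) *ᵥ l) ^ (Fintype.card n - 2) *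
        (l ⬝ᵥ Ghat *ᵥ l) * (l ⬝ᵥ Gtil *ᵥ l) := by
    refine Continuous.ext_on (dense_setOf_det_add_smul_one_ne_zero g)
      (by unfold principalSymbol; fun_prop) (by fun_prop) fun t ht => ?_
    exact det_principalSymbol_of_isUnit_det (by simp [hg]) (Ne.isUnit ht) hn Ghat Gtil l
  simpa using congrFun hperturb 0

end NormedField

theorem det_principalSymbol_gaugeFixedMaxwell_general
    (g ghat gtil fhat ftil : Matrix (Fin 4) (Fin 4) ℝ)
    (hg : gᵀ = g)
    (hfhat : fhatᵀ = -fhat) (hftil : ftilᵀ = -ftil) (l : Fin 4 → ℝ) :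
    ((l ⬝ᵥ g.mulVec l) • g - Matrix.vecMulVec (g.mulVec l) (g.mulVec l) +
        Matrix.vecMulVec ((ghat + fhat).mulVec l) ((gtil + ftil)ᵀ.mulVec l)).det =
      g.det * (l ⬝ᵥ g.mulVec l) ^ 2 * (l ⬝ᵥ ghat.mulVec l) * (l ⬝ᵥ gtil.mulVec l) := by
  have h := det_principalSymbol hg (by simp) (ghat + fhat) (gtil + ftil) l
  rwa [add_mulVec, add_mulVec, dotProduct_add, dotProduct_add,
    dotProduct_mulVec_self_eq_zero_of_transpose_eq_neg hfhat,
    dotProduct_mulVec_self_eq_zero_of_transpose_eq_neg hftil, add_zero, add_zero] at h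

/-- the principal symbol
`P(l) = (lᵀgl)·g − (gl)(gl)ᵀ + (Ĝl)(G̃ᵀl)ᵀ` of gauge-fixed extended
electromagnetism, with `Ĝ = ĝ + f̂`, `G̃ = g̃ + f̃`, satisfies
`det P(l) = det(g)·(lᵀgl)²·(lᵀĝl)·(lᵀg̃l)`. -/
theorem det_principalSymbol_gaugeFixedMaxwell
    (g ghat gtil fhat ftil : Matrix (Fin 4) (Fin 4) ℝ)
    (hg : gᵀ = g) (hghat : ghatᵀ = ghat) (hgtil : gtilᵀ = gtil)
    (hfhat : fhatᵀ = -fhat) (hftil : ftilᵀ = -ftil) (l : Fin 4 → ℝ) :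
    ((l ⬝ᵥ g.mulVec l) • g - Matrix.vecMulVec (g.mulVec l) (g.mulVec l) +
        Matrix.vecMulVec ((ghat + fhat).mulVec l) ((gtil + ftil)ᵀ.mulVec l)).det =
      g.det * (l ⬝ᵥ g.mulVec l) ^ 2 * (l ⬝ᵥ ghat.mulVec l) * (l ⬝ᵥ gtil.mulVec l) :=
  det_principalSymbol_gaugeFixedMaxwell_general g ghat gtil fhat ftil hg hfhat hftil l
end
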